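/- In the two-action multiplicative bandit where the safe action multiplies wealth by r_safe and the risky action multiplies it by r_loss with probability p or r_win with probability 1−p (with r_loss < 1 ≤ r_safe < r_win), the expected-value indifference point is p_E = (r_win − r_safe)/(r_win − r_loss), while the growth-rate indifference point is p_T = (log r_win − log r_safe)/(log r_win − log r_loss), and p_T < p_E. -/
import Mathlib


open Real

/-- In the two-action multiplicative bandit where the safe action
multiplies wealth by `r_safe` and the risky action multiplies it by `r_loss` with
probability `p` or `r_win` with probability `1 − p` (with `r_loss < 1 ≤ r_safe < r_win`),
the expected-value indifference point is `p_E = (r_win − r_safe)/(r_win − r_loss)` (where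
`r_safe = p_E * r_loss + (1 − p_E) * r_win`), the growth-rate indifference point is
`p_T = (log r_win − log r_safe)/(log r_win − log r_loss)` (where
`log r_safe = p_T * log r_loss + (1 − p_T) * log r_win`), and `p_T < p_E`. -/
theorem bandit_indifference_points
    (r_loss r_safe r_win : ℝ)
    (h0 : 0 < r_loss) (h1 : r_loss < 1) (h2 : 1 ≤ r_safe) (h3 : r_safe < r_win)
    (pE pT : ℝ)
    (hpE : pE = (r_win - r_safe) / (r_win - r_loss))
    (hpT : pT = (Real.log r_win - Real.log r_safe) / (Real.log r_win - Real.log r_loss)) :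
    (r_safe = pE * r_loss + (1 - pE) * r_win) ∧
    (Real.log r_safe = pT * Real.log r_loss + (1 - pT) * Real.log r_win) ∧
    pT < pE := by
  have hlw : r_loss < r_win := lt_trans (lt_of_lt_of_le h1 h2) h3
  have hwl : (0:ℝ) < r_win - r_loss := by linarith
  have hlogl : Real.log r_loss < Real.log r_win := Real.log_lt_log h0 hlw
  have hllw : (0:ℝ) < Real.log r_win - Real.log r_loss := by linarith
  have hE : r_safe = pE * r_loss + (1 - pE) * r_win := by
    subst hpE; field_simp; ring
  have hT : Real.log r_safe = pT * Real.log r_loss + (1 - pT) * Real.log r_win := by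
    subst hpT; field_simp; ring
  refine ⟨hE, hT, ?_⟩
  have hpE0 : 0 < pE := by
    rw [hpE]; exact div_pos (by linarith) hwl
  have hpE1 : pE < 1 := by
    rw [hpE]; rw [div_lt_one hwl]; linarith
  -- strict concavity
  have hconc : pE * Real.log r_loss + (1 - pE) * Real.log r_win
      < Real.log (pE * r_loss + (1 - pE) * r_win) := by
    have := strictConcaveOn_log_Ioi.2 (Set.mem_Ioi.2 h0)
      (Set.mem_Ioi.2 (lt_trans h0 hlw)) (ne_of_lt hlw) hpE0
      (show (0:ℝ) < 1 - pE by linarith) (by ring)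
    simpa using this
  rw [← hE] at hconc
  -- pT * (log r_win - log r_loss) = log r_win - log r_safe < pE * (log r_win - log r_loss)
  have key : pT * (Real.log r_win - Real.log r_loss) < pE * (Real.log r_win - Real.log r_loss) := by
    have : pT * (Real.log r_win - Real.log r_loss) = Real.log r_win - Real.log r_safe := by
      rw [hpT]; field_simp
    rw [this]; nlinarith
  exact lt_of_mul_lt_mul_right key (le_of_lt hllw)
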